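/- For 0 ≤ k ≤ ⌊n/2⌋, the incomplete q-Chebyshev polynomials of the first kind satisfy the non-homogeneous recurrence T_{n+2}^k = (1+q^{n+1}) x T_{n+1}^k + q^{n+1} s T_n^k − q^{n+1+k²} ([n]_q/[n-k]_q) [n-k choose k]_q · ((-q;q)_{n-k-1}/(-q;q)_k) · s^{k+1} x^{n-2k}. -/

import Mathlib

/-!
Each summand `t n j` of `T_n^k` satisfies the complete three-term recurrence
`t (n+2) (j+1) = (1 + q^(n+1)) x t (n+1) (j+1) + q^(n+1) s t n j` (for `2j + 2 ≤ n`), and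
`t (n+2) 0 = (1 + q^(n+1)) x t (n+1) 0`. Summing over `j ≤ k`, the right-hand side produces
`q^(n+1) s T_n^(k-1)` instead of `q^(n+1) s T_n^k`; the missing summand `q^(n+1) s t n k` is the
non-homogeneous term. The denominators do not vanish because `q` is not a root of unity.
-/

/-- q-integer [n]_q = (1-q^n)/(1-q). -/
noncomputable def qint (q : ℂ) (n : ℕ) : ℂ := (1 - q ^ n) / (1 - q)

/-- q-factorial [n]_q!. -/
noncomputable def qfact (q : ℂ) (n : ℕ) : ℂ := ∏ i ∈ Finset.range n, qint q (i + 1)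

/-- Gaussian (q-binomial) coefficient, 0 for k > n. -/
noncomputable def qbinom (q : ℂ) (n k : ℕ) : ℂ :=
  if k ≤ n then qfact q n / (qfact q (n - k) * qfact q k) else 0

/-- q-shifted factorial (x;q)_n. -/
noncomputable def qpoch (x q : ℂ) (n : ℕ) : ℂ := ∏ i ∈ Finset.range n, (1 - q ^ i * x)

/-- Partial sum defining incomplete q-Chebyshev polynomials of the second kind:
`Usum x s q n (k+1)` is U_n^k(x,s,q), and `Usum x s q n 0 = 0` is the empty sum (k = -1). -/
noncomputable def Usum (x s q : ℂ) (n m : ℕ) : ℂ :=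
  ∑ j ∈ Finset.range m,
    q ^ (j ^ 2) * qbinom q (n - j) j * (qpoch (-q) q (n - j) / qpoch (-q) q j) *
      s ^ j * x ^ (n - 2 * j)

/-- Partial sum defining incomplete q-Chebyshev polynomials of the first kind:
`Tsum x s q n (k+1)` is T_n^k(x,s,q). -/
noncomputable def Tsum (x s q : ℂ) (n m : ℕ) : ℂ :=
  ∑ j ∈ Finset.range m,
    q ^ (j ^ 2) * (qint q n / qint q (n - j)) * qbinom q (n - j) j *
      (qpoch (-q) q (n - j - 1) / qpoch (-q) q j) * s ^ j * x ^ (n - 2 * j)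

lemma pow_ne_one_of_not_isOfFinOrder {q : ℂ} (hq : ¬IsOfFinOrder q) {i : ℕ} (hi : i ≠ 0) :
    q ^ i ≠ 1 :=
  fun h => hq (isOfFinOrder_iff_pow_eq_one.mpr ⟨i, Nat.pos_of_ne_zero hi, h⟩)

lemma pow_ne_neg_one_of_not_isOfFinOrder {q : ℂ} (hq : ¬IsOfFinOrder q) {i : ℕ} (hi : i ≠ 0) :
    q ^ i ≠ -1 := fun h =>
  pow_ne_one_of_not_isOfFinOrder hq (Nat.mul_ne_zero hi two_ne_zero) (by rw [pow_mul, h]; norm_num)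

lemma one_sub_pow_ne_zero {q : ℂ} (hq : ¬IsOfFinOrder q) {i : ℕ} (hi : i ≠ 0) :
    1 - q ^ i ≠ 0 :=
  sub_ne_zero.mpr (pow_ne_one_of_not_isOfFinOrder hq hi).symm

lemma one_add_pow_ne_zero {q : ℂ} (hq : ¬IsOfFinOrder q) {i : ℕ} (hi : i ≠ 0) :
    1 + q ^ i ≠ 0 := by
  rw [add_comm, ← sub_neg_eq_add, sub_ne_zero]
  exact pow_ne_neg_one_of_not_isOfFinOrder hq hi

lemma qint_ne_zero {q : ℂ} (hq : ¬IsOfFinOrder q) {n : ℕ} (hn : n ≠ 0) : qint q n ≠ 0 :=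
  div_ne_zero (one_sub_pow_ne_zero hq hn) (by simpa using one_sub_pow_ne_zero hq one_ne_zero)

lemma qfact_ne_zero {q : ℂ} (hq : ¬IsOfFinOrder q) (n : ℕ) : qfact q n ≠ 0 :=
  Finset.prod_ne_zero_iff.mpr fun i _ => qint_ne_zero hq i.succ_ne_zero

lemma qpoch_neg_self_ne_zero {q : ℂ} (hq : ¬IsOfFinOrder q) (n : ℕ) : qpoch (-q) q n ≠ 0 :=
  Finset.prod_ne_zero_iff.mpr fun i _ => by
    simpa [pow_succ] using one_add_pow_ne_zero hq i.succ_ne_zero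

lemma qfact_succ (q : ℂ) (n : ℕ) : qfact q (n + 1) = qfact q n * qint q (n + 1) :=
  Finset.prod_range_succ _ n

lemma qpoch_neg_self_succ (q : ℂ) (n : ℕ) :
    qpoch (-q) q (n + 1) = qpoch (-q) q n * (1 + q ^ (n + 1)) := by
  rw [qpoch, Finset.prod_range_succ, ← qpoch]; ring

noncomputable def Tterm (x s q : ℂ) (n j : ℕ) : ℂ :=
  q ^ (j ^ 2) * (qint q n / qint q (n - j)) * qbinom q (n - j) j *
    (qpoch (-q) q (n - j - 1) / qpoch (-q) q j) * s ^ j * x ^ (n - 2 * j)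

lemma Tsum_eq_sum_Tterm (x s q : ℂ) (n m : ℕ) :
    Tsum x s q n m = ∑ j ∈ Finset.range m, Tterm x s q n j := rfl

lemma Tterm_zero {q : ℂ} (hq : ¬IsOfFinOrder q) (x s : ℂ) {n : ℕ} (hn : n ≠ 0) :
    Tterm x s q n 0 = qpoch (-q) q (n - 1) * x ^ n := by
  simp [Tterm, qbinom, qint_ne_zero hq hn, qfact_ne_zero hq, show qfact q 0 = 1 from rfl,
    show qpoch (-q) q 0 = 1 from rfl]

lemma Tterm_add_two_zero {q : ℂ} (hq : ¬IsOfFinOrder q) (x s : ℂ) (n : ℕ) :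
    Tterm x s q (n + 2) 0 = (1 + q ^ (n + 1)) * x * Tterm x s q (n + 1) 0 := by
  rw [Tterm_zero hq x s (by omega), Tterm_zero hq x s (by omega), Nat.add_sub_cancel,
    show n + 2 - 1 = n + 1 by omega, qpoch_neg_self_succ]
  ring

lemma Tterm_add_two_succ {q : ℂ} (hq : ¬IsOfFinOrder q) (x s : ℂ) {n j : ℕ}
    (h : 2 * j + 2 ≤ n) :
    Tterm x s q (n + 2) (j + 1) =
      (1 + q ^ (n + 1)) * x * Tterm x s q (n + 1) (j + 1) + q ^ (n + 1) * s * Tterm x s q n j := by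
  obtain ⟨m, rfl⟩ : ∃ m, n = m + 2 * j + 2 := ⟨n - (2 * j + 2), by omega⟩
  simp only [Tterm, qbinom, Nat.add_sub_cancel,
    show m + 2 * j + 2 + 2 - (j + 1) = m + j + 1 + 1 + 1 by omega,
    show m + 2 * j + 2 + 1 - (j + 1) = m + j + 1 + 1 by omega,
    show m + 2 * j + 2 - j = m + j + 1 + 1 by omega,
    show m + 2 * j + 2 + 2 - 2 * (j + 1) = m + 1 + 1 by omega,
    show m + 2 * j + 2 + 1 - 2 * (j + 1) = m + 1 by omega,
    show m + 2 * j + 2 - 2 * j = m + 1 + 1 by omega,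
    show m + j + 1 + 1 + 1 - (j + 1) = m + 1 + 1 by omega,
    show m + j + 1 + 1 - (j + 1) = m + 1 by omega,
    show m + j + 1 + 1 - j = m + 1 + 1 by omega,
    if_pos (show j + 1 ≤ m + j + 1 + 1 + 1 by omega), if_pos (show j + 1 ≤ m + j + 1 + 1 by omega),
    if_pos (show j ≤ m + j + 1 + 1 by omega), qfact_succ, qpoch_neg_self_succ]
  -- All q-factorials now run through `qfact q (m + j + 1)`, `qfact q (m + 1)`, `qfact q j` and
  -- the Pochhammer symbols through `(-q;q)_(m+j+1)`, `(-q;q)_j`: a rational identity remains.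
  have := qfact_ne_zero hq (m + j + 1)
  have := qfact_ne_zero hq (m + 1)
  have := qfact_ne_zero hq j
  have := qpoch_neg_self_ne_zero hq j
  have := qpoch_neg_self_ne_zero hq (m + j + 1)
  have := one_add_pow_ne_zero hq (i := j + 1) (by omega)
  have := one_sub_pow_ne_zero hq (i := 1) (by omega)
  have := one_sub_pow_ne_zero hq (i := j + 1) (by omega)
  have := one_sub_pow_ne_zero hq (i := m + 1 + 1) (by omega)
  have := one_sub_pow_ne_zero hq (i := m + j + 1 + 1) (by omega)
  have := one_sub_pow_ne_zero hq (i := m + j + 1 + 1 + 1) (by omega)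
  simp only [qint, pow_one] at *
  field_simp
  ring

lemma Tsum_add_two_succ {q : ℂ} (hq : ¬IsOfFinOrder q) (x s : ℂ) {n k : ℕ} (hk : 2 * k ≤ n) :
    Tsum x s q (n + 2) (k + 1) =
      (1 + q ^ (n + 1)) * x * Tsum x s q (n + 1) (k + 1) + q ^ (n + 1) * s * Tsum x s q n k := by
  simp only [Tsum_eq_sum_Tterm, Finset.sum_range_succ' _ k, Tterm_add_two_zero hq]
  rw [Finset.sum_congr rfl fun j hj =>
    Tterm_add_two_succ hq x s (n := n) (by have := Finset.mem_range.mp hj; omega),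
    Finset.sum_add_distrib, ← Finset.mul_sum, ← Finset.mul_sum]
  ring

theorem Tinc_nonhom_rec_general (q : ℂ) (hq1 : ‖q‖ < 1)
    (x s : ℂ) (n k : ℕ) (hk : 2 * k ≤ n) :
    Tsum x s q (n + 2) (k + 1) =
      (1 + q ^ (n + 1)) * x * Tsum x s q (n + 1) (k + 1) +
        q ^ (n + 1) * s * Tsum x s q n (k + 1) -
        q ^ (n + 1 + k ^ 2) * (qint q n / qint q (n - k)) * qbinom q (n - k) k *
          (qpoch (-q) q (n - k - 1) / qpoch (-q) q k) * s ^ (k + 1) * x ^ (n - 2 * k) := by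
  have hq : ¬IsOfFinOrder q := fun h => hq1.ne h.norm_eq_one
  rw [Tsum_add_two_succ hq x s hk, Tsum_eq_sum_Tterm x s q n (k + 1), Finset.sum_range_succ,
    ← Tsum_eq_sum_Tterm, Tterm]
  ring

theorem Tinc_nonhom_rec (q : ℂ) (hq0 : 0 < ‖q‖) (hq1 : ‖q‖ < 1)
    (x s : ℂ) (n k : ℕ) (hk : 2 * k ≤ n) :
    Tsum x s q (n + 2) (k + 1) =
      (1 + q ^ (n + 1)) * x * Tsum x s q (n + 1) (k + 1) +
        q ^ (n + 1) * s * Tsum x s q n (k + 1) -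
        q ^ (n + 1 + k ^ 2) * (qint q n / qint q (n - k)) * qbinom q (n - k) k *
          (qpoch (-q) q (n - k - 1) / qpoch (-q) q k) * s ^ (k + 1) * x ^ (n - 2 * k) :=
  Tinc_nonhom_rec_general q hq1 x s n k hk
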